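/- Let u be a concave, law-determined monetary utility function on L^∞ of an atomless probability space, satisfying the Fatou property. Then u(ξ) = ess inf ξ for all ξ ∈ L^∞ if and only if condition C fails for every pair (k,a) with k < 0 and a > 0, i.e. if and only if for all k < 0, a > 0 and α ∈ (0,1) one has u(α δ_k + (1−α) δ_a) < 0. -/

import Mathlib

/-!
If `u = essInfR`, a two-point variable with law `α δ_k + (1 - α) δ_a` has utility `k < 0`;
such a variable exists because an atomless probability space has a set of every measure
(Sierpiński). Conversely, a monetary utility always dominates the essential infimum `m`.
If `u ξ > m`, pick `m < s < u ξ`: the set `{ξ ≤ s}` has measure strictly between `0` and `1`,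
and the variable equal to `s` there and to a large constant elsewhere dominates `ξ`.
Shifted down by `u ξ`, it is a two-point variable with values of opposite signs and
non-negative utility, which by law invariance contradicts the hypothesis.
-/

open MeasureTheory Filter Set
open scoped ENNReal

/-- A (representative of an) element of `L^∞`: a measurable, essentially bounded function. -/
def BddMeas {Ω : Type} [MeasurableSpace Ω] (P : Measure Ω) (ξ : Ω → ℝ) : Prop :=
  Measurable ξ ∧ ∃ C : ℝ, ∀ᵐ ω ∂P, |ξ ω| ≤ C

/-- `ξ` has the two-point law `l·δ_x + (1-l)·δ_y`. -/
def HasDyadicLaw {Ω : Type} [MeasurableSpace Ω] (P : Measure Ω) (ξ : Ω → ℝ)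
    (x y l : ℝ) : Prop :=
  P.map ξ = ENNReal.ofReal l • Measure.dirac x + ENNReal.ofReal (1 - l) • Measure.dirac y

/-- The essential infimum of `ξ` with respect to `P`. -/
noncomputable def essInfR {Ω : Type} [MeasurableSpace Ω] (P : Measure Ω) (ξ : Ω → ℝ) : ℝ :=
  sSup {c : ℝ | ∀ᵐ ω ∂P, c ≤ ξ ω}

section Sierpinski

variable {Ω : Type*} [MeasurableSpace Ω] {P : Measure Ω}

def Atomless (P : Measure Ω) : Prop :=
  ∀ A : Set Ω, MeasurableSet A → 0 < P A →
    ∃ B : Set Ω, B ⊆ A ∧ MeasurableSet B ∧ 0 < P B ∧ P B < P A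

theorem exists_near_optimal_disjoint_extension {t : ℝ≥0∞} (ht : t ≠ ∞) {B : Set Ω}
    (hB : P B ≤ t) :
    ∃ C, MeasurableSet C ∧ Disjoint B C ∧ P B + P C ≤ t ∧
      ∀ D, MeasurableSet D → Disjoint B D → P B + P D ≤ t → P D ≤ 2 * P C := by
  set S := {x | ∃ D, MeasurableSet D ∧ Disjoint B D ∧ P B + P D ≤ t ∧ P D = x}
  have hS : sSup S ≤ t := sSup_le <| by
    rintro _ ⟨D, -, -, hD, rfl⟩
    exact le_add_self.trans hD
  have hle_sSup : ∀ D, MeasurableSet D → Disjoint B D → P B + P D ≤ t → P D ≤ sSup S :=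
    fun D hD hBD hDt => le_sSup ⟨D, hD, hBD, hDt, rfl⟩
  rcases eq_or_ne (sSup S) 0 with h0 | h0
  · refine ⟨∅, .empty, disjoint_empty B, by simpa using hB, fun D hD hBD hDt => ?_⟩
    simpa [h0] using hle_sSup D hD hBD hDt
  · obtain ⟨_, ⟨C, hC, hBC, hCt, rfl⟩, hlt⟩ :=
      lt_sSup_iff.1 (ENNReal.half_lt_self h0 (ne_top_of_le_ne_top ht hS))
    refine ⟨C, hC, hBC, hCt, fun D hD hBD hDt => (hle_sSup D hD hBD hDt).trans ?_⟩
    rw [mul_comm, ← ENNReal.div_le_iff two_ne_zero ENNReal.ofNat_ne_top]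
    exact hlt.le

namespace Atomless

variable [IsFiniteMeasure P] (hP : Atomless P)
include hP

theorem exists_subset_measure_le_half {A : Set Ω} (hA : MeasurableSet A) (hA₀ : 0 < P A) :
    ∃ C ⊆ A, MeasurableSet C ∧ 0 < P C ∧ P C ≤ P A / 2 := by
  obtain ⟨B, hBA, hB, hB₀, hBA'⟩ := hP A hA hA₀
  by_cases hhalf : P B ≤ P A / 2
  · exact ⟨B, hBA, hB, hB₀, hhalf⟩
  · have hdiff : P (A \ B) = P A - P B :=
      measure_sdiff hBA hB.nullMeasurableSet (measure_ne_top P B)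
    refine ⟨A \ B, sdiff_subset, hA.diff hB, by rw [hdiff]; exact tsub_pos_of_lt hBA', ?_⟩
    calc P (A \ B) = P A - P B := hdiff
      _ ≤ P A - P A / 2 := tsub_le_tsub_left (not_le.1 hhalf).le _
      _ = P A / 2 := ENNReal.sub_half (measure_ne_top P A)

theorem exists_subset_measure_le {A : Set Ω} (hA : MeasurableSet A) (hA₀ : 0 < P A)
    {ε : ℝ≥0∞} (hε : ε ≠ 0) : ∃ C ⊆ A, MeasurableSet C ∧ 0 < P C ∧ P C ≤ ε := by
  have hpow : ∀ n : ℕ, ∃ C ⊆ A, MeasurableSet C ∧ 0 < P C ∧ P C ≤ P A * 2⁻¹ ^ n := by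
    intro n
    induction n with
    | zero => exact ⟨A, subset_rfl, hA, hA₀, by simp⟩
    | succ n ih =>
      obtain ⟨C, hCA, hC, hC₀, hCn⟩ := ih
      obtain ⟨D, hDC, hD, hD₀, hDC'⟩ := hP.exists_subset_measure_le_half hC hC₀
      refine ⟨D, hDC.trans hCA, hD, hD₀, ?_⟩
      calc P D ≤ P C / 2 := hDC'
        _ ≤ P A * 2⁻¹ ^ n / 2 := by gcongr
        _ = P A * 2⁻¹ ^ (n + 1) := by rw [pow_succ, ← mul_assoc, ENNReal.div_eq_inv_mul, mul_comm]
  obtain ⟨n, hn⟩ :=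
    ENNReal.exists_inv_two_pow_lt (ENNReal.div_pos hε (measure_ne_top P (univ : Set Ω))).ne'
  obtain ⟨C, hCA, hC, hC₀, hCn⟩ := hpow n
  refine ⟨C, hCA, hC, hC₀, hCn.trans ?_⟩
  calc P A * 2⁻¹ ^ n
      ≤ P univ * (ε / P univ) := by gcongr; exact subset_univ A
    _ ≤ ε := ENNReal.mul_div_le

/-- Sierpiński's theorem. Greedily add disjoint sets that are within a factor two of the largest
admissible ones; if the union fell short of `t`, a small set outside it would have been admissible
at every step, forcing every step to gain at least half its measure. -/
theorem exists_measure_eq {t : ℝ≥0∞} (ht : t ≤ P univ) : ∃ B, MeasurableSet B ∧ P B = t := by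
  have ht' : t ≠ ∞ := ne_top_of_le_ne_top (measure_ne_top P univ) ht
  choose! F hF using fun B (hB : MeasurableSet B ∧ P B ≤ t) =>
    exists_near_optimal_disjoint_extension (P := P) ht' hB.2
  set s : ℕ → Set Ω := fun n => (fun B => B ∪ F B)^[n] ∅
  have hs_succ : ∀ n, s (n + 1) = s n ∪ F (s n) := fun n => Function.iterate_succ_apply' _ n ∅
  have hs : ∀ n, MeasurableSet (s n) ∧ P (s n) ≤ t := by
    intro n
    induction n with
    | zero => simp [s]
    | succ n ih =>
      obtain ⟨hC, hdisj, hle, -⟩ := hF _ ih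
      rw [hs_succ, measure_union hdisj hC]
      exact ⟨ih.1.union hC, hle⟩
  have hs_mono : Monotone s :=
    monotone_nat_of_le_succ fun n => (hs_succ n).symm ▸ subset_union_left
  have hU : MeasurableSet (⋃ n, s n) := .iUnion fun n => (hs n).1
  have hPU : P (⋃ n, s n) = ⨆ n, P (s n) := hs_mono.measure_iUnion
  refine ⟨⋃ n, s n, hU, (hPU.trans_le (iSup_le fun n => (hs n).2)).antisymm (not_lt.1 ?_)⟩
  intro hlt
  have hUc : 0 < P (⋃ n, s n)ᶜ := by
    rw [measure_compl hU (measure_ne_top _ _)]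
    exact tsub_pos_of_lt (hlt.trans_le ht)
  obtain ⟨C, hCU, hC, hC₀, hCt⟩ :=
    hP.exists_subset_measure_le hU.compl hUc (tsub_pos_of_lt hlt).ne'
  have hCF : ∀ n, P C ≤ 2 * P (F (s n)) := fun n =>
    (hF _ (hs n)).2.2.2 C hC
      (disjoint_compl_right.mono_right (hCU.trans (compl_subset_compl.2 (subset_iUnion s n))))
      (calc P (s n) + P C ≤ P (⋃ n, s n) + (t - P (⋃ n, s n)) :=
            add_le_add (measure_mono (subset_iUnion s n)) hCt
        _ = t := add_tsub_cancel_of_le hlt.le)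
  have hgrowth : ∀ n : ℕ, n * P C ≤ 2 * P (s n) := by
    intro n
    induction n with
    | zero => simp
    | succ n ih =>
      obtain ⟨hFm, hdisj, -, -⟩ := hF _ (hs n)
      rw [hs_succ, measure_union hdisj hFm, mul_add, Nat.cast_succ, add_mul, one_mul]
      exact add_le_add ih (hCF n)
  obtain ⟨n, hn⟩ :=
    ENNReal.exists_nat_mul_gt hC₀.ne' (ENNReal.mul_ne_top (by norm_num : (2 : ℝ≥0∞) ≠ ∞) ht')
  exact (hn.trans_le (hgrowth n)).not_ge (by gcongr; exact (hs n).2)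

end Atomless

end Sierpinski

section TwoPoint

variable {Ω : Type} [MeasurableSpace Ω] {P : Measure Ω}

open Classical in
noncomputable def twoPoint (B : Set Ω) (k a : ℝ) : Ω → ℝ := fun ω => if ω ∈ B then k else a

theorem bddMeas_const (c : ℝ) : BddMeas P (fun _ => c) :=
  ⟨measurable_const, |c|, ae_of_all _ fun _ => le_rfl⟩

theorem BddMeas.add_const {ξ : Ω → ℝ} (hξ : BddMeas P ξ) (c : ℝ) :
    BddMeas P (fun ω => ξ ω + c) := by
  obtain ⟨C, hC⟩ := hξ.2
  exact ⟨hξ.1.add_const c, C + |c|, hC.mono fun ω hω => (abs_add_le _ _).trans (by gcongr)⟩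

theorem bddMeas_twoPoint {B : Set Ω} (hB : MeasurableSet B) (k a : ℝ) :
    BddMeas P (twoPoint B k a) := by
  refine ⟨Measurable.ite hB measurable_const measurable_const, max |k| |a|,
    ae_of_all _ fun ω => ?_⟩
  by_cases hω : ω ∈ B <;> simp [twoPoint, hω]

theorem map_twoPoint {B : Set Ω} (hB : MeasurableSet B) (k a : ℝ) :
    P.map (twoPoint B k a) = P B • Measure.dirac k + P Bᶜ • Measure.dirac a := by
  have hm : Measurable (twoPoint B k a) := (bddMeas_twoPoint (P := P) hB k a).1
  have hk : twoPoint B k a =ᵐ[P.restrict B] fun _ => k :=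
    (ae_restrict_iff' hB).2 (ae_of_all _ fun ω hω => if_pos hω)
  have ha : twoPoint B k a =ᵐ[P.restrict Bᶜ] fun _ => a :=
    (ae_restrict_iff' hB.compl).2 (ae_of_all _ fun ω hω => if_neg hω)
  conv_lhs => rw [← Measure.restrict_add_restrict_compl (μ := P) hB]
  rw [Measure.map_add _ _ hm, Measure.map_congr hk, Measure.map_congr ha, Measure.map_const,
    Measure.map_const, Measure.restrict_apply_univ, Measure.restrict_apply_univ]

theorem hasDyadicLaw_twoPoint [IsProbabilityMeasure P] {B : Set Ω} (hB : MeasurableSet B)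
    (k a : ℝ) : HasDyadicLaw P (twoPoint B k a) k a (P.real B) := by
  rw [HasDyadicLaw, map_twoPoint hB, ← probReal_compl_eq_one_sub hB, ofReal_measureReal,
    ofReal_measureReal]

theorem BddMeas.nonempty_ae_le {ξ : Ω → ℝ} (hξ : BddMeas P ξ) :
    {c : ℝ | ∀ᵐ ω ∂P, c ≤ ξ ω}.Nonempty := by
  obtain ⟨C, hC⟩ := hξ.2
  exact ⟨-C, hC.mono fun ω hω => neg_le_of_abs_le hω⟩

theorem BddMeas.bddAbove_ae_le [NeZero P] {ξ : Ω → ℝ} (hξ : BddMeas P ξ) :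
    BddAbove {c : ℝ | ∀ᵐ ω ∂P, c ≤ ξ ω} := by
  obtain ⟨C, hC⟩ := hξ.2
  refine ⟨C, fun c hc => ?_⟩
  obtain ⟨ω, hcω, hω⟩ := ((show ∀ᵐ ω ∂P, c ≤ ξ ω from hc).and hC).exists
  exact hcω.trans (le_of_abs_le hω)

theorem essInfR_le_of_measure_pos {ξ : Ω → ℝ} (hξ : BddMeas P ξ) {c : ℝ}
    (h : 0 < P {ω | ξ ω ≤ c}) : essInfR P ξ ≤ c :=
  csSup_le hξ.nonempty_ae_le fun _ hc' => not_lt.1 fun hlt =>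
    h.ne' (measure_mono_null (fun _ hω => not_le.2 (lt_of_le_of_lt hω hlt)) (ae_iff.1 hc'))

theorem measure_pos_of_essInfR_lt [NeZero P] {ξ : Ω → ℝ} (hξ : BddMeas P ξ) {c : ℝ}
    (h : essInfR P ξ < c) : 0 < P {ω | ξ ω ≤ c} := by
  refine pos_iff_ne_zero.2 fun h0 => h.not_ge (le_csSup hξ.bddAbove_ae_le ?_)
  filter_upwards [measure_eq_zero_iff_ae_notMem.1 h0] with ω hω
  exact (not_le.1 hω).le

theorem essInfR_twoPoint_le {B : Set Ω} (hB : MeasurableSet B) (hB₀ : 0 < P B) (k a : ℝ) :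
    essInfR P (twoPoint B k a) ≤ k := by
  refine essInfR_le_of_measure_pos (bddMeas_twoPoint hB k a) (hB₀.trans_le (measure_mono ?_))
  intro ω hω
  simp [twoPoint, hω]

theorem Atomless.exists_hasDyadicLaw_essInfR_le [IsProbabilityMeasure P] (hP : Atomless P)
    {α : ℝ} (hα₀ : 0 < α) (hα₁ : α ≤ 1) (k a : ℝ) :
    ∃ ξ, BddMeas P ξ ∧ HasDyadicLaw P ξ k a α ∧ essInfR P ξ ≤ k := by
  obtain ⟨B, hB, hPB⟩ :=
    hP.exists_measure_eq (ENNReal.ofReal_le_one.2 hα₁ |>.trans_eq measure_univ.symm)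
  have hα : P.real B = α := by rw [measureReal_def, hPB, ENNReal.toReal_ofReal hα₀.le]
  exact ⟨twoPoint B k a, bddMeas_twoPoint hB k a, hα ▸ hasDyadicLaw_twoPoint hB k a,
    essInfR_twoPoint_le hB (hPB ▸ ENNReal.ofReal_pos.2 hα₀) k a⟩

end TwoPoint

structure IsMonetaryUtility {Ω : Type} [MeasurableSpace Ω] (P : Measure Ω) (u : (Ω → ℝ) → ℝ) :
    Prop where
  add_const : ∀ ξ : Ω → ℝ, BddMeas P ξ → ∀ h : ℝ, u (fun ω => ξ ω + h) = u ξ + h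
  mono : ∀ ξ η : Ω → ℝ, BddMeas P ξ → BddMeas P η → (∀ᵐ ω ∂P, ξ ω ≤ η ω) → u ξ ≤ u η
  map_zero : u (fun _ => 0) = 0

namespace IsMonetaryUtility

variable {Ω : Type} [MeasurableSpace Ω] {P : Measure Ω} {u : (Ω → ℝ) → ℝ}
  (hu : IsMonetaryUtility P u)
include hu

theorem apply_const (c : ℝ) : u (fun _ => c) = c := by
  simpa [hu.map_zero] using hu.add_const _ (bddMeas_const 0) c

theorem le_of_ae_le {ξ : Ω → ℝ} (hξ : BddMeas P ξ) {c : ℝ} (h : ∀ᵐ ω ∂P, ξ ω ≤ c) : u ξ ≤ c :=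
  hu.apply_const c ▸ hu.mono _ _ hξ (bddMeas_const c) h

theorem le_of_ae_ge {ξ : Ω → ℝ} (hξ : BddMeas P ξ) {c : ℝ} (h : ∀ᵐ ω ∂P, c ≤ ξ ω) : c ≤ u ξ :=
  hu.apply_const c ▸ hu.mono _ _ (bddMeas_const c) hξ h

theorem essInfR_le {ξ : Ω → ℝ} (hξ : BddMeas P ξ) : essInfR P ξ ≤ u ξ :=
  csSup_le hξ.nonempty_ae_le fun _ hc => hu.le_of_ae_ge hξ hc

theorem le_essInfR [IsProbabilityMeasure P]
    (hLaw : ∀ ξ η : Ω → ℝ, BddMeas P ξ → BddMeas P η → P.map ξ = P.map η → u ξ = u η)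
    (hneg : ∀ k : ℝ, k < 0 → ∀ a : ℝ, 0 < a → ∀ α : ℝ, 0 < α → α < 1 →
      ∃ ξ : Ω → ℝ, BddMeas P ξ ∧ HasDyadicLaw P ξ k a α ∧ u ξ < 0)
    {ξ : Ω → ℝ} (hξ : BddMeas P ξ) : u ξ ≤ essInfR P ξ := by
  by_contra! hlt
  obtain ⟨s, hms, hsu⟩ := exists_between hlt
  set A := {ω | ξ ω ≤ s}
  have hA : MeasurableSet A := hξ.1 measurableSet_Iic
  have hA₀ : 0 < P.real A :=
    ENNReal.toReal_pos (measure_pos_of_essInfR_lt hξ hms).ne' (measure_ne_top P A)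
  have hA₁ : P.real A < 1 := by
    have h : P A < 1 := lt_of_le_of_ne prob_le_one fun h1 =>
      hsu.not_ge (hu.le_of_ae_le hξ (ae_iff.2 ((prob_compl_eq_zero_iff hA).2 h1)))
    simpa [measureReal_def] using
      (ENNReal.toReal_lt_toReal (measure_ne_top P A) ENNReal.one_ne_top).2 h
  obtain ⟨C, hCξ⟩ := hξ.2
  set a := max C (u ξ) + 1
  obtain ⟨ζ, hζ, hζlaw, hζneg⟩ :=
    hneg (s - u ξ) (by linarith) (a - u ξ) (by linarith [le_max_right C (u ξ)]) _ hA₀ hA₁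
  have hη := bddMeas_twoPoint (P := P) hA (s - u ξ) (a - u ξ)
  have hηζ : u (twoPoint A (s - u ξ) (a - u ξ)) = u ζ :=
    hLaw _ _ hη hζ ((hasDyadicLaw_twoPoint hA _ _).trans hζlaw.symm)
  have hξη : ∀ᵐ ω ∂P, ξ ω + -u ξ ≤ twoPoint A (s - u ξ) (a - u ξ) ω := by
    filter_upwards [hCξ] with ω hω
    by_cases hωA : ω ∈ A
    · have : ξ ω ≤ s := hωA
      simp only [twoPoint, if_pos hωA]
      linarith
    · simp only [twoPoint, if_neg hωA]
      linarith [le_abs_self (ξ ω), le_max_left C (u ξ)]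
  have hη₀ : 0 ≤ u (twoPoint A (s - u ξ) (a - u ξ)) := by
    have := hu.mono _ _ (hξ.add_const _) hη hξη
    rwa [hu.add_const ξ hξ, add_neg_cancel] at this
  exact hζneg.not_ge (hηζ ▸ hη₀)

end IsMonetaryUtility

theorem stmt_3_general {Ω : Type} [MeasurableSpace Ω] (P : Measure Ω) [IsProbabilityMeasure P]
    (u : (Ω → ℝ) → ℝ)
    (hAtomless : ∀ A : Set Ω, MeasurableSet A → 0 < P A →
      ∃ B : Set Ω, B ⊆ A ∧ MeasurableSet B ∧ 0 < P B ∧ P B < P A)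
    (hTI : ∀ ξ : Ω → ℝ, BddMeas P ξ → ∀ h : ℝ, u (fun ω => ξ ω + h) = u ξ + h)
    (hMono : ∀ ξ η : Ω → ℝ, BddMeas P ξ → BddMeas P η → (∀ᵐ ω ∂P, ξ ω ≤ η ω) → u ξ ≤ u η)
    (hNorm : u (fun _ => 0) = 0)
    (hLaw : ∀ ξ η : Ω → ℝ, BddMeas P ξ → BddMeas P η → P.map ξ = P.map η → u ξ = u η)
    :
    (∀ ξ : Ω → ℝ, BddMeas P ξ → u ξ = essInfR P ξ) ↔
      (∀ k : ℝ, k < 0 → ∀ a : ℝ, 0 < a → ∀ α : ℝ, 0 < α → α < 1 →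
        ∃ ξ : Ω → ℝ, BddMeas P ξ ∧ HasDyadicLaw P ξ k a α ∧ u ξ < 0) := by
  have hu : IsMonetaryUtility P u := ⟨hTI, hMono, hNorm⟩
  refine ⟨fun h k hk a _ α hα₀ hα₁ => ?_,
    fun hneg ξ hξ => (hu.le_essInfR hLaw hneg hξ).antisymm (hu.essInfR_le hξ)⟩
  obtain ⟨ξ, hξ, hlaw, hinf⟩ := Atomless.exists_hasDyadicLaw_essInfR_le hAtomless hα₀ hα₁.le k a
  exact ⟨ξ, hξ, hlaw, (h ξ hξ).trans_lt (hinf.trans_lt hk)⟩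

theorem stmt_3 {Ω : Type} [MeasurableSpace Ω] (P : Measure Ω) [IsProbabilityMeasure P]
    (u : (Ω → ℝ) → ℝ)
    (hAtomless : ∀ A : Set Ω, MeasurableSet A → 0 < P A →
      ∃ B : Set Ω, B ⊆ A ∧ MeasurableSet B ∧ 0 < P B ∧ P B < P A)
    (hTI : ∀ ξ : Ω → ℝ, BddMeas P ξ → ∀ h : ℝ, u (fun ω => ξ ω + h) = u ξ + h)
    (hMono : ∀ ξ η : Ω → ℝ, BddMeas P ξ → BddMeas P η → (∀ᵐ ω ∂P, ξ ω ≤ η ω) → u ξ ≤ u η)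
    (hNorm : u (fun _ => 0) = 0)
    (hLaw : ∀ ξ η : Ω → ℝ, BddMeas P ξ → BddMeas P η → P.map ξ = P.map η → u ξ = u η)
    (hConc : ∀ ξ η : Ω → ℝ, BddMeas P ξ → BddMeas P η → ∀ l : ℝ, 0 ≤ l → l ≤ 1 →
      l * u ξ + (1 - l) * u η ≤ u (fun ω => l * ξ ω + (1 - l) * η ω))
    (hFatou : ∀ (ξs : ℕ → Ω → ℝ) (ξ : Ω → ℝ), (∀ n, BddMeas P (ξs n)) → BddMeas P ξ →
      (∃ C : ℝ, ∀ n, ∀ᵐ ω ∂P, |ξs n ω| ≤ C) →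
      TendstoInMeasure P ξs Filter.atTop ξ →
      Filter.limsup (fun n => u (ξs n)) Filter.atTop ≤ u ξ)
    :
    (∀ ξ : Ω → ℝ, BddMeas P ξ → u ξ = essInfR P ξ) ↔
      (∀ k : ℝ, k < 0 → ∀ a : ℝ, 0 < a → ∀ α : ℝ, 0 < α → α < 1 →
        ∃ ξ : Ω → ℝ, BddMeas P ξ ∧ HasDyadicLaw P ξ k a α ∧ u ξ < 0) :=
  stmt_3_general P u hAtomless hTI hMono hNorm hLaw
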